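/- arXiv:1810.07211 — 2 statements merged into one kernel-verified Lean document; each statement's English description precedes it below -/
import Mathlib

section
/- Let H be a symmetric n×n matrix with λ_min(H) ≥ -ε^{1/2} for ε > 0, let g ∈ ℝⁿ be nonzero, and let d be the regularized Newton direction solving (H + (‖g‖^{1/2} + ε^{1/2}) I) d = -g. Then ‖d‖ ≤ ‖g‖^{1/2}. -/
/-!
The regularised matrix `H + (‖g‖^{1/2} + ε^{1/2}) I` is coercive with constant `‖g‖^{1/2}`,
because `λ_min(H) + ε^{1/2} ≥ 0`. Pairing the Newton system with `d` then gives
`‖g‖^{1/2} ‖d‖² ≤ ⟪-g, d⟫ ≤ ‖g‖ ‖d‖`, that is `‖d‖ ≤ ‖g‖ / ‖g‖^{1/2} = ‖g‖^{1/2}`.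
-/

open scoped RealInnerProductSpace

section Coercive

variable {E : Type*} [NormedAddCommGroup E] [InnerProductSpace ℝ E]

theorem LinearMap.mul_norm_sq_le_inner_self_of_unit {T : E →ₗ[ℝ] E} {lam : ℝ}
    (hT : ∀ v : E, ‖v‖ = 1 → lam ≤ ⟪T v, v⟫) (v : E) : lam * ‖v‖ ^ 2 ≤ ⟪T v, v⟫ := by
  rcases eq_or_ne v 0 with rfl | hv
  · simp
  have hpos : 0 < ‖v‖ := norm_pos_iff.mpr hv
  have hunit := hT (‖v‖⁻¹ • v) (norm_smul_inv_norm hv)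
  rw [map_smul, real_inner_smul_left, real_inner_smul_right, ← mul_assoc, ← sq,
    inv_pow, le_inv_mul_iff₀ (by positivity)] at hunit
  linarith

theorem LinearMap.norm_le_div_of_coercive {A : E →ₗ[ℝ] E} {m : ℝ} (hm : 0 < m)
    (hA : ∀ v : E, m * ‖v‖ ^ 2 ≤ ⟪A v, v⟫) {b d : E} (hd : A d = b) : ‖d‖ ≤ ‖b‖ / m := by
  rcases eq_or_ne d 0 with rfl | hd0
  · simp only [norm_zero]
    positivity
  have hpos : 0 < ‖d‖ := norm_pos_iff.mpr hd0
  have key : m * ‖d‖ * ‖d‖ ≤ ‖b‖ * ‖d‖ := calc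
    m * ‖d‖ * ‖d‖ = m * ‖d‖ ^ 2 := by ring
    _ ≤ ⟪A d, d⟫ := hA d
    _ = ⟪b, d⟫ := by rw [hd]
    _ ≤ ‖b‖ * ‖d‖ := real_inner_le_norm b d
  rw [le_div_iff₀ hm, mul_comm]
  exact le_of_mul_le_mul_right key hpos

end Coercive

theorem Matrix.toEuclideanCLM_add_smul_one_apply {n : Type*} [Fintype n] [DecidableEq n]
    (H : Matrix n n ℝ) (c : ℝ) (v : EuclideanSpace ℝ n) :
    Matrix.toEuclideanCLM (𝕜 := ℝ) (H + c • (1 : Matrix n n ℝ)) v =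
      Matrix.toEuclideanCLM (𝕜 := ℝ) H v + c • v := by
  simp [map_add, map_smul]

theorem stmt5_general {n : ℕ} (H : Matrix (Fin n) (Fin n) ℝ)
    (g d : EuclideanSpace ℝ (Fin n)) (ε : ℝ) (hg : 0 < ‖g‖) (lam : ℝ)
    (hlam_min : ∀ v : EuclideanSpace ℝ (Fin n), ‖v‖ = 1 →
      lam ≤ ⟪Matrix.toEuclideanCLM (𝕜 := ℝ) H v, v⟫)
    (hlam : -Real.sqrt ε ≤ lam)
    (hd : Matrix.toEuclideanCLM (𝕜 := ℝ)
      (H + (Real.sqrt ‖g‖ + Real.sqrt ε) • (1 : Matrix (Fin n) (Fin n) ℝ)) d = -g) :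
    ‖d‖ ≤ Real.sqrt ‖g‖ := by
  set c := Real.sqrt ‖g‖ + Real.sqrt ε
  set A := (Matrix.toEuclideanCLM (𝕜 := ℝ) (H + c • (1 : Matrix (Fin n) (Fin n) ℝ))).toLinearMap
  have hcoercive (v : EuclideanSpace ℝ (Fin n)) : Real.sqrt ‖g‖ * ‖v‖ ^ 2 ≤ ⟪A v, v⟫ := by
    have hH := LinearMap.mul_norm_sq_le_inner_self_of_unit
      (T := (Matrix.toEuclideanCLM (𝕜 := ℝ) H).toLinearMap) hlam_min v
    simp only [A, ContinuousLinearMap.coe_coe, Matrix.toEuclideanCLM_add_smul_one_apply,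
      inner_add_left, real_inner_smul_left, real_inner_self_eq_norm_sq] at hH ⊢
    nlinarith [sq_nonneg ‖v‖]
  calc ‖d‖ ≤ ‖-g‖ / Real.sqrt ‖g‖ :=
        LinearMap.norm_le_div_of_coercive (Real.sqrt_pos.mpr hg) hcoercive hd
    _ = Real.sqrt ‖g‖ := by rw [norm_neg, Real.div_sqrt]

/-- If the minimum eigenvalue `lam` of a symmetric matrix `H` satisfies `lam ≥ -ε^{1/2}`,
`g ≠ 0`, and `d` solves the regularized Newton system
`(H + (‖g‖^{1/2} + ε^{1/2}) I) d = -g`, then `‖d‖ ≤ ‖g‖^{1/2}`. -/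
theorem stmt5 {n : ℕ} (H : Matrix (Fin n) (Fin n) ℝ) (hH : H.IsHermitian)
    (g d : EuclideanSpace ℝ (Fin n)) (ε : ℝ) (hε : 0 < ε) (hg : 0 < ‖g‖) (lam : ℝ)
    (hlam_min : ∀ v : EuclideanSpace ℝ (Fin n), ‖v‖ = 1 →
      lam ≤ ⟪Matrix.toEuclideanCLM (𝕜 := ℝ) H v, v⟫)
    (hlam_attain : ∃ v : EuclideanSpace ℝ (Fin n), ‖v‖ = 1 ∧
      ⟪Matrix.toEuclideanCLM (𝕜 := ℝ) H v, v⟫ = lam)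
    (hlam : -Real.sqrt ε ≤ lam)
    (hd : Matrix.toEuclideanCLM (𝕜 := ℝ)
      (H + (Real.sqrt ‖g‖ + Real.sqrt ε) • (1 : Matrix (Fin n) (Fin n) ℝ)) d = -g) :
    ‖d‖ ≤ Real.sqrt ‖g‖ :=
  stmt5_general H g d ε hg lam hlam_min hlam hd
end

section
/- Let m : ℝⁿ → ℝ be twice differentiable with L_H-Lipschitz Hessian, and suppose d ∈ ℝⁿ satisfies ∇m(x)ᵀd ≤ 0, dᵀ∇²m(x)d = -‖d‖³ (i.e., d is a negative-curvature direction with Hd = λd, ‖d‖ = -λ). Then for every α ∈ (0, 3/(L_H + η)] with η > 0: m(x + αd) - m(x) ≤ -(η/6)α³‖d‖³. -/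
/-!
Restricted to the line `t ↦ x + t • d`, the Lipschitz Hessian gives `g'' t ≤ g'' 0 + L_H ‖d‖³ t`,
and integrating twice yields the cubic Taylor upper bound. With `∇m(x)ᵀd ≤ 0` and curvature
`-‖d‖³` the bound is `α²‖d‖³ (-1/2 + L_H α / 6)`, which is at most `-(η/6) α³ ‖d‖³` exactly when
`α (L_H + η) ≤ 3`.
-/

open scoped RealInnerProductSpace

open Set

lemma image_le_of_hasDerivAt_le_hasDerivAt {f f' B B' : ℝ → ℝ} {a b : ℝ}
    (hf : ∀ t, HasDerivAt f (f' t) t) (hB : ∀ t, HasDerivAt B (B' t) t) (ha : f a ≤ B a)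
    (bound : ∀ t ∈ Ico a b, f' t ≤ B' t) : ∀ ⦃t⦄, t ∈ Icc a b → f t ≤ B t :=
  image_le_of_deriv_right_le_deriv_boundary
    (fun t _ => (hf t).continuousAt.continuousWithinAt) (fun t _ => (hf t).hasDerivWithinAt) ha
    (fun t _ => (hB t).continuousAt.continuousWithinAt) (fun t _ => (hB t).hasDerivWithinAt) bound

lemma le_cubic_of_second_deriv_le {g g' g'' : ℝ → ℝ} {C α : ℝ}
    (hg : ∀ t, HasDerivAt g (g' t) t) (hg' : ∀ t, HasDerivAt g' (g'' t) t)
    (hC : ∀ t ∈ Ico 0 α, g'' t ≤ g'' 0 + C * t) :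
    ∀ ⦃t⦄, t ∈ Icc 0 α → g t ≤ g 0 + t * g' 0 + t ^ 2 / 2 * g'' 0 + C * t ^ 3 / 6 := by
  have hB' (t : ℝ) : HasDerivAt (fun t => g' 0 + t * g'' 0 + C * t ^ 2 / 2) (g'' 0 + C * t) t := by
    refine ((((hasDerivAt_id t).mul_const (g'' 0)).const_add (g' 0)).add
      (((hasDerivAt_pow 2 t).const_mul C).div_const 2)).congr_deriv ?_
    push_cast
    ring
  have hB (t : ℝ) : HasDerivAt (fun t => g 0 + t * g' 0 + t ^ 2 / 2 * g'' 0 + C * t ^ 3 / 6)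
      (g' 0 + t * g'' 0 + C * t ^ 2 / 2) t := by
    refine (((((hasDerivAt_id t).mul_const (g' 0)).const_add (g 0)).add
      (((hasDerivAt_pow 2 t).div_const 2).mul_const (g'' 0))).add
      (((hasDerivAt_pow 3 t).const_mul C).div_const 6)).congr_deriv ?_
    push_cast
    ring
  have hg'_le := image_le_of_hasDerivAt_le_hasDerivAt hg' hB' (by simp) hC
  exact image_le_of_hasDerivAt_le_hasDerivAt hg hB (by simp)
    fun t ht => hg'_le (Ico_subset_Icc_self ht)

variable {E : Type*} [NormedAddCommGroup E] [NormedSpace ℝ E]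

lemma apply_pair_sub_apply_pair_le (A B : ContinuousMultilinearMap ℝ (fun _ : Fin 2 => E) ℝ)
    (d : E) :
    A ![d, d] - B ![d, d] ≤ ‖A - B‖ * ‖d‖ ^ 2 := by
  have hd : ‖(![d, d] : Fin 2 → E)‖ ≤ ‖d‖ :=
    pi_norm_le_iff_of_nonneg (norm_nonneg d) |>.mpr (Fin.forall_fin_two.mpr ⟨le_rfl, le_rfl⟩)
  simpa using (le_abs_self _).trans ((A - B).le_opNorm_mul_pow_of_le hd)

theorem ContDiff.le_taylor_two_add_of_hessian_lipschitz {f : E → ℝ} {L : ℝ} (hf : ContDiff ℝ 2 f)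
    (x d : E) (hlip : ∀ y, ‖iteratedFDeriv ℝ 2 f y - iteratedFDeriv ℝ 2 f x‖ ≤ L * ‖y - x‖)
    {α : ℝ} (hα : 0 ≤ α) :
    f (x + α • d) ≤ f x + α * fderiv ℝ f x d + α ^ 2 / 2 * iteratedFDeriv ℝ 2 f x ![d, d]
      + L * ‖d‖ ^ 3 * α ^ 3 / 6 := by
  have hline (t : ℝ) : HasDerivAt (fun t : ℝ => x + t • d) d t := by
    simpa using ((hasDerivAt_id t).smul_const d).const_add x
  have hg (t : ℝ) : HasDerivAt (fun t => f (x + t • d)) (fderiv ℝ f (x + t • d) d) t :=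
    ((hf.differentiable two_ne_zero _).hasFDerivAt).comp_hasDerivAt t (hline t)
  have hg' (t : ℝ) : HasDerivAt (fun t => fderiv ℝ f (x + t • d) d)
      (iteratedFDeriv ℝ 2 f (x + t • d) ![d, d]) t := by
    have hDf := ((hf.fderiv_right one_add_one_eq_two.le).differentiable one_ne_zero
      _).hasFDerivAt.comp_hasDerivAt t (hline t)
    simpa [iteratedFDeriv_two_apply] using hDf.clm_apply (hasDerivAt_const t d)
  have hC (t : ℝ) (ht : t ∈ Ico 0 α) :
      iteratedFDeriv ℝ 2 f (x + t • d) ![d, d] ≤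
        iteratedFDeriv ℝ 2 f (x + (0:ℝ) • d) ![d, d] + L * ‖d‖ ^ 3 * t := by
    have h := (apply_pair_sub_apply_pair_le _ _ d).trans (mul_le_mul_of_nonneg_right
      (hlip (x + t • d)) (by positivity))
    simp only [add_sub_cancel_left, norm_smul, Real.norm_of_nonneg ht.1] at h
    simp only [zero_smul, add_zero]
    linarith
  simpa using le_cubic_of_second_deriv_le hg hg' hC ⟨hα, le_rfl⟩

theorem stmt17_general {n : ℕ} (m : EuclideanSpace ℝ (Fin n) → ℝ) (LH η : ℝ)
    (hm : ContDiff ℝ 2 m)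
    (hlip : ∀ x y : EuclideanSpace ℝ (Fin n),
      ‖iteratedFDeriv ℝ 2 m x - iteratedFDeriv ℝ 2 m y‖ ≤ LH * ‖x - y‖)
    (x d : EuclideanSpace ℝ (Fin n))
    (hgd : ⟪gradient m x, d⟫ ≤ 0)
    (hcurv : iteratedFDeriv ℝ 2 m x ![d, d] = -‖d‖ ^ 3)
    (α : ℝ) (hα0 : 0 < α) (hα1 : α ≤ 3 / (LH + η)) :
    m (x + α • d) - m x ≤ -(η / 6) * α ^ 3 * ‖d‖ ^ 3 := by
  have htaylor := hm.le_taylor_two_add_of_hessian_lipschitz x d (fun y => hlip y x) hα0.le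
  rw [← inner_gradient_left, hcurv] at htaylor
  have hsum : 0 < LH + η := by
    by_contra! h
    linarith [div_nonpos_of_nonneg_of_nonpos zero_le_three h]
  have hstep : α * (LH + η) ≤ 3 := (le_div_iff₀ hsum).mp hα1
  nlinarith [mul_nonpos_of_nonneg_of_nonpos hα0.le hgd,
    mul_le_mul_of_nonneg_left hstep (by positivity : 0 ≤ α ^ 2 * ‖d‖ ^ 3)]

/-- Decrease of an `L_H`-Lipschitz-Hessian model along a negative curvature direction:
if `∇m(x)ᵀd ≤ 0` and `dᵀ∇²m(x)d = -‖d‖³`, then for `0 < α ≤ 3/(L_H + η)` one has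
`m(x + αd) - m(x) ≤ -(η/6)α³‖d‖³`. -/
theorem stmt17 {n : ℕ} (m : EuclideanSpace ℝ (Fin n) → ℝ) (LH η : ℝ) (hη : 0 < η)
    (hm : ContDiff ℝ 2 m)
    (hlip : ∀ x y : EuclideanSpace ℝ (Fin n),
      ‖iteratedFDeriv ℝ 2 m x - iteratedFDeriv ℝ 2 m y‖ ≤ LH * ‖x - y‖)
    (x d : EuclideanSpace ℝ (Fin n))
    (hgd : ⟪gradient m x, d⟫ ≤ 0)
    (hcurv : iteratedFDeriv ℝ 2 m x ![d, d] = -‖d‖ ^ 3)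
    (α : ℝ) (hα0 : 0 < α) (hα1 : α ≤ 3 / (LH + η)) :
    m (x + α • d) - m x ≤ -(η / 6) * α ^ 3 * ‖d‖ ^ 3 :=
  stmt17_general m LH η hm hlip x d hgd hcurv α hα0 hα1
end
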